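/- Let T1, T2, T12 be the following bounded operators on ℓ²(ℕ, ℂ) with standard orthonormal basis (e_i): T1 e_0 = 0 and T1 e_i = √(i/(i+3)) e_{i−1} for i ≥ 1; T2 e_0 = 0, T2 e_1 = √(13/25) e_0, and T2 e_i = √(i/(i+1)) e_{i−1} for i ≥ 2; T12 e_0 = √(1/5) e_0 and T12 e_i = 0 for i ≥ 1. Then the block operator T = [[T1, T12],[0, T2]] on ℓ²(ℕ,ℂ) ⊕ ℓ²(ℕ,ℂ) is a 2-hypercontraction, while T2 is not a 2-hypercontraction. -/

import Mathlib

/-!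
In coordinates, both defect forms `‖z‖² - ‖Tz‖²` and `‖z‖² - 2‖Tz‖² + ‖T²z‖²` of `T` split into
independent pieces, one for each group of coordinates of `z = (x, y)` that `T` mixes: `{x₀}`,
`{x₁, y₀}`, `{x₂, y₁}` and the single coordinates `x_{n+3}`, `y_{n+2}`. On a single coordinate only
the squared weights `w` of the shifts enter, and `2 wₙ ≤ 1 + wₙ₋₁ wₙ` holds for both shifts there.
`T₂` alone fails on `e₁`, where `2 · 13/25 > 1` while `T₂² e₁ = 0`; in `T` the coupling `T₁₂` feeds
`T₂ e₁` back into the first component, which pairs `y₁` with `x₂` and makes the defect on `{x₂, y₁}`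
a positive definite quadratic form.
-/

open ContinuousLinearMap

noncomputable section

def IsHypercontraction {H : Type*} [NormedAddCommGroup H] [InnerProductSpace ℂ H]
    [CompleteSpace H] (T : H →L[ℂ] H) (n : ℕ) : Prop :=
  ∀ k : ℕ, 1 ≤ k → k ≤ n →
    (∑ j ∈ Finset.range (k + 1), ((-1 : ℂ) ^ j * (k.choose j : ℂ)) •
      ((ContinuousLinearMap.adjoint T) ^ j * T ^ j)).IsPositive

local notation "ℓ²" => lp (fun _ : ℕ => ℂ) 2

section Hypercontraction

variable {H : Type*} [NormedAddCommGroup H] [InnerProductSpace ℂ H] [CompleteSpace H]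

theorem isSelfAdjoint_hypercontractionSum (T : H →L[ℂ] H) (k : ℕ) :
    IsSelfAdjoint (∑ j ∈ Finset.range (k + 1), ((-1 : ℂ) ^ j * (k.choose j : ℂ)) •
      (adjoint T ^ j * T ^ j)) := by
  refine isSelfAdjoint_sum _ fun j _ => .smul ?_ ?_
  · simp [IsSelfAdjoint, star_pow]
  · rw [← star_eq_adjoint, ← star_pow]
    exact .star_mul_self _

theorem reApplyInnerSelf_hypercontractionSum (T : H →L[ℂ] H) (k : ℕ) (z : H) :
    (∑ j ∈ Finset.range (k + 1), ((-1 : ℂ) ^ j * (k.choose j : ℂ)) •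
      (adjoint T ^ j * T ^ j)).reApplyInnerSelf z =
      ∑ j ∈ Finset.range (k + 1), (-1 : ℝ) ^ j * k.choose j * ‖(T ^ j) z‖ ^ 2 := by
  simp only [reApplyInnerSelf, sum_apply, sum_inner, map_sum]
  refine Finset.sum_congr rfl fun j _ => ?_
  have hc : (-1 : ℂ) ^ j * (k.choose j : ℂ) = (((-1 : ℝ) ^ j * k.choose j : ℝ) : ℂ) := by
    push_cast; rfl
  rw [hc, smul_apply, inner_smul_left, ← star_eq_adjoint, ← star_pow, star_eq_adjoint,
    mul_apply_eq_comp, adjoint_inner_left, inner_self_eq_norm_sq_to_K]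
  simp [← Complex.ofReal_pow]

theorem isHypercontraction_iff (T : H →L[ℂ] H) (n : ℕ) :
    IsHypercontraction T n ↔ ∀ k, 1 ≤ k → k ≤ n → ∀ z,
      0 ≤ ∑ j ∈ Finset.range (k + 1), (-1 : ℝ) ^ j * k.choose j * ‖(T ^ j) z‖ ^ 2 := by
  simp only [IsHypercontraction, isPositive_def', isSelfAdjoint_hypercontractionSum, true_and,
    reApplyInnerSelf_hypercontractionSum]

theorem isHypercontraction_two_iff (T : H →L[ℂ] H) :
    IsHypercontraction T 2 ↔
      ∀ z, ‖T z‖ ^ 2 ≤ ‖z‖ ^ 2 ∧ 2 * ‖T z‖ ^ 2 ≤ ‖z‖ ^ 2 + ‖T (T z)‖ ^ 2 := by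
  have h1 : ∀ z, ∑ j ∈ Finset.range 2, (-1 : ℝ) ^ j * (1 : ℕ).choose j * ‖(T ^ j) z‖ ^ 2 =
      ‖z‖ ^ 2 - ‖T z‖ ^ 2 := fun z => by simp [Finset.sum_range_succ]; ring
  have h2 : ∀ z, ∑ j ∈ Finset.range 3, (-1 : ℝ) ^ j * (2 : ℕ).choose j * ‖(T ^ j) z‖ ^ 2 =
      ‖z‖ ^ 2 - 2 * ‖T z‖ ^ 2 + ‖T (T z)‖ ^ 2 := fun z => by
    simp [Finset.sum_range_succ, pow_succ]; ring
  rw [isHypercontraction_iff]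
  constructor
  · intro h z
    have := h 1 le_rfl one_le_two z
    have := h 2 one_le_two le_rfl z
    constructor <;> linarith [h1 z, h2 z]
  · intro h k hk1 hk2 z
    interval_cases k
    · linarith [h1 z, h z]
    · linarith [h2 z, h z]

theorem not_isHypercontraction_two_of_apply_apply_eq_zero (T : H →L[ℂ] H) {z : H}
    (hz : T (T z) = 0) (h : ‖z‖ ^ 2 < 2 * ‖T z‖ ^ 2) : ¬ IsHypercontraction T 2 := fun hT => by
  have := ((isHypercontraction_two_iff T).1 hT z).2
  rw [hz, norm_zero] at this
  linarith

end Hypercontraction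

namespace lp

section Coordinates

variable {ι 𝕜 : Type*} [NormedField 𝕜] {p : ENNReal} [Fact (1 ≤ p)]

theorem hasSum_mul_apply_single [DecidableEq ι] (hp : p ≠ ⊤)
    (A : lp (fun _ : ι => 𝕜) p →L[𝕜] lp (fun _ : ι => 𝕜) p) (x : lp (fun _ : ι => 𝕜) p) (i : ι) :
    HasSum (fun j => x j * A (lp.single p j 1) i) (A x i) := by
  have := ((lp.hasSum_single hp x).mapL A).mapL (lp.evalCLM 𝕜 (fun _ : ι => 𝕜) p i)
  have hsingle : ∀ j, lp.single (E := fun _ : ι => 𝕜) p j (x j) = x j • lp.single p j 1 :=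
    fun j => by rw [← lp.single_smul, smul_eq_mul, mul_one]
  simp only [hsingle, map_smul] at this
  exact this

theorem apply_eq_of_apply_single_eq_zero [DecidableEq ι] (hp : p ≠ ⊤)
    (A : lp (fun _ : ι => 𝕜) p →L[𝕜] lp (fun _ : ι => 𝕜) p)
    (x : lp (fun _ : ι => 𝕜) p) {i j₀ : ι} (h : ∀ j ≠ j₀, A (lp.single p j 1) i = 0) :
    A x i = x j₀ * A (lp.single p j₀ 1) i :=
  (hasSum_mul_apply_single hp A x i).unique <| hasSum_single j₀ fun j hj => by simp [h j hj]

theorem apply_eq_of_backwardShift (hp : p ≠ ⊤)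
    {A : lp (fun _ : ℕ => 𝕜) p →L[𝕜] lp (fun _ : ℕ => 𝕜) p} (h0 : A (lp.single p 0 1) = 0)
    (hs : ∀ j, ∃ c : 𝕜, A (lp.single p (j + 1) 1) = c • lp.single p j 1)
    {i : ℕ} {c : 𝕜} (hc : A (lp.single p (i + 1) 1) = c • lp.single p i 1)
    (x : lp (fun _ : ℕ => 𝕜) p) : A x i = c * x (i + 1) := by
  have hA : ∀ j ≠ i + 1, A (lp.single p j 1) i = 0
    | 0, _ => by simp [h0]
    | j + 1, hj => by
      obtain ⟨d, hd⟩ := hs j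
      simp [hd, lp.single_apply, show i ≠ j by omega]
  rw [apply_eq_of_apply_single_eq_zero hp A x hA, hc, lp.coeFn_smul, Pi.smul_apply,
    lp.single_apply_self, smul_eq_mul, mul_one, mul_comm]

theorem apply_eq_of_apply_single_succ_eq_zero (hp : p ≠ ⊤)
    {A : lp (fun _ : ℕ => 𝕜) p →L[𝕜] lp (fun _ : ℕ => 𝕜) p}
    (hs : ∀ j, A (lp.single p (j + 1) 1) = 0) {c : 𝕜}
    (hc : A (lp.single p 0 1) = c • lp.single p 0 1)
    (x : lp (fun _ : ℕ => 𝕜) p) (i : ℕ) : A x i = if i = 0 then c * x 0 else 0 := by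
  have hA : ∀ j ≠ 0, A (lp.single p j 1) i = 0 := fun j hj => by
    obtain ⟨k, rfl⟩ := Nat.exists_eq_succ_of_ne_zero hj
    simp [hs k]
  rw [apply_eq_of_apply_single_eq_zero hp A x hA, hc, lp.coeFn_smul, Pi.smul_apply, smul_eq_mul]
  split_ifs with hi
  · rw [hi, lp.single_apply_self, mul_one, mul_comm]
  · rw [lp.single_apply_ne p 0 _ hi, mul_zero, mul_zero]

end Coordinates

section NormSq

variable {E : Type*} [NormedAddCommGroup E]

theorem hasSum_norm_sq (f : lp (fun _ : ℕ => E) 2) : HasSum (fun i => ‖f i‖ ^ 2) (‖f‖ ^ 2) := by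
  simpa using lp.hasSum_norm (p := 2) (by norm_num) f

theorem norm_sq_eq_sum_add_tsum (f : lp (fun _ : ℕ => E) 2) (k : ℕ) :
    ‖f‖ ^ 2 = ∑ i ∈ Finset.range k, ‖f i‖ ^ 2 + ∑' i, ‖f (i + k)‖ ^ 2 := by
  rw [(hasSum_norm_sq f).summable.sum_add_tsum_nat_add, (hasSum_norm_sq f).tsum_eq]

theorem summable_norm_sq_nat_add (f : lp (fun _ : ℕ => E) 2) (k : ℕ) :
    Summable fun i => ‖f (i + k)‖ ^ 2 :=
  (summable_nat_add_iff k).2 (hasSum_norm_sq f).summable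

theorem norm_sq_add_norm_sq_le_of_coord {x y u s : lp (fun _ : ℕ => E) 2}
    (h0 : ‖u 0‖ ^ 2 ≤ ‖x 1‖ ^ 2 + ‖y 0‖ ^ 2) (hu : ∀ n, ‖u (n + 1)‖ ^ 2 ≤ ‖x (n + 2)‖ ^ 2)
    (hs : ∀ n, ‖s n‖ ^ 2 ≤ ‖y (n + 1)‖ ^ 2) :
    ‖u‖ ^ 2 + ‖s‖ ^ 2 ≤ ‖x‖ ^ 2 + ‖y‖ ^ 2 := by
  have tail_u : ∑' n, ‖u (n + 1)‖ ^ 2 ≤ ∑' n, ‖x (n + 2)‖ ^ 2 :=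
    (summable_norm_sq_nat_add u 1).tsum_le_tsum hu (summable_norm_sq_nat_add x 2)
  have tail_s : ∑' n, ‖s (n + 0)‖ ^ 2 ≤ ∑' n, ‖y (n + 1)‖ ^ 2 :=
    (summable_norm_sq_nat_add s 0).tsum_le_tsum hs (summable_norm_sq_nat_add y 1)
  rw [norm_sq_eq_sum_add_tsum x 2, norm_sq_eq_sum_add_tsum y 1, norm_sq_eq_sum_add_tsum u 1,
    norm_sq_eq_sum_add_tsum s 0]
  simp only [Finset.sum_range_succ, Finset.sum_range_zero]
  linarith [sq_nonneg ‖x 0‖]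

theorem two_mul_norm_sq_add_norm_sq_le_of_coord {x y u s v t : lp (fun _ : ℕ => E) 2}
    (h0 : 2 * ‖u 0‖ ^ 2 ≤ ‖x 1‖ ^ 2 + ‖y 0‖ ^ 2)
    (h1 : 2 * ‖u 1‖ ^ 2 + 2 * ‖s 0‖ ^ 2 ≤ ‖x 2‖ ^ 2 + ‖y 1‖ ^ 2 + ‖v 0‖ ^ 2)
    (hu : ∀ n, 2 * ‖u (n + 2)‖ ^ 2 ≤ ‖x (n + 3)‖ ^ 2 + ‖v (n + 1)‖ ^ 2)
    (hs : ∀ n, 2 * ‖s (n + 1)‖ ^ 2 ≤ ‖y (n + 2)‖ ^ 2 + ‖t n‖ ^ 2) :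
    2 * (‖u‖ ^ 2 + ‖s‖ ^ 2) ≤ ‖x‖ ^ 2 + ‖y‖ ^ 2 + ‖v‖ ^ 2 + ‖t‖ ^ 2 := by
  have tail_u : 2 * ∑' n, ‖u (n + 2)‖ ^ 2 ≤ ∑' n, ‖x (n + 3)‖ ^ 2 + ∑' n, ‖v (n + 1)‖ ^ 2 := by
    rw [← tsum_mul_left, ← (summable_norm_sq_nat_add x 3).tsum_add (summable_norm_sq_nat_add v 1)]
    exact ((summable_norm_sq_nat_add u 2).mul_left 2).tsum_le_tsum hu
      ((summable_norm_sq_nat_add x 3).add (summable_norm_sq_nat_add v 1))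
  have tail_s : 2 * ∑' n, ‖s (n + 1)‖ ^ 2 ≤ ∑' n, ‖y (n + 2)‖ ^ 2 + ∑' n, ‖t (n + 0)‖ ^ 2 := by
    rw [← tsum_mul_left, ← (summable_norm_sq_nat_add y 2).tsum_add (summable_norm_sq_nat_add t 0)]
    exact ((summable_norm_sq_nat_add s 1).mul_left 2).tsum_le_tsum hs
      ((summable_norm_sq_nat_add y 2).add (summable_norm_sq_nat_add t 0))
  rw [norm_sq_eq_sum_add_tsum x 3, norm_sq_eq_sum_add_tsum y 2, norm_sq_eq_sum_add_tsum u 2,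
    norm_sq_eq_sum_add_tsum s 1, norm_sq_eq_sum_add_tsum v 1, norm_sq_eq_sum_add_tsum t 0]
  simp only [Finset.sum_range_succ, Finset.sum_range_zero]
  linarith [sq_nonneg ‖x 0‖]

end NormSq

end lp

theorem norm_ofReal_sqrt_mul_sq {r : ℝ} (hr : 0 ≤ r) (z : ℂ) :
    ‖(√r : ℂ) * z‖ ^ 2 = r * ‖z‖ ^ 2 := by
  rw [norm_mul, mul_pow, Complex.norm_real, Real.norm_of_nonneg (Real.sqrt_nonneg r),
    Real.sq_sqrt hr]

theorem norm_ofReal_mul_add_sq_le (a b : ℝ) (z w : ℂ) :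
    ‖(a : ℂ) * z + b * w‖ ^ 2 ≤ (a ^ 2 + b ^ 2) * (‖z‖ ^ 2 + ‖w‖ ^ 2) := by
  have h := norm_add_le ((a : ℂ) * z) (b * w)
  simp only [norm_mul, Complex.norm_real, Real.norm_eq_abs] at h
  have := pow_le_pow_left₀ (norm_nonneg _) h 2
  nlinarith [sq_nonneg (|a| * ‖w‖ - |b| * ‖z‖), sq_abs a, sq_abs b]

theorem sq_norm_sub_norm_le_norm_add_sq {E : Type*} [SeminormedAddCommGroup E] (a b : E) :
    (‖a‖ - ‖b‖) ^ 2 ≤ ‖a + b‖ ^ 2 := by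
  rw [← sq_abs, ← norm_neg b, ← sub_neg_eq_add]
  exact pow_le_pow_left₀ (abs_nonneg _) (abs_norm_sub_norm_le a (-b)) 2

section BlockExample

variable {T₁ T₂ T₁₂ : ℓ² →L[ℂ] ℓ²}

theorem firstRow_apply_zero (h₁ : ∀ f i, T₁ f i = (√(((i : ℝ) + 1) / (i + 4)) : ℂ) * f (i + 1))
    (h₁₂ : ∀ f i, T₁₂ f i = if i = 0 then (√(1 / 5) : ℂ) * f 0 else 0) (x y : ℓ²) :
    (T₁ x + T₁₂ y) 0 = 1 / 2 * x 1 + (√(1 / 5) : ℂ) * y 0 := by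
  have : √((((0 : ℕ) : ℝ) + 1) / ((0 : ℕ) + 4)) = 1 / 2 := by
    rw [Real.sqrt_eq_iff_mul_self_eq] <;> norm_num
  rw [lp.coeFn_add, Pi.add_apply, h₁, h₁₂, if_pos rfl, this]
  push_cast
  ring

theorem norm_sq_firstRow_apply_succ
    (h₁ : ∀ f i, T₁ f i = (√(((i : ℝ) + 1) / (i + 4)) : ℂ) * f (i + 1))
    (h₁₂ : ∀ f i, T₁₂ f i = if i = 0 then (√(1 / 5) : ℂ) * f 0 else 0) (x y : ℓ²) (n : ℕ) :
    ‖(T₁ x + T₁₂ y) (n + 1)‖ ^ 2 = ((n : ℝ) + 2) / (n + 5) * ‖x (n + 2)‖ ^ 2 := by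
  rw [lp.coeFn_add, Pi.add_apply, h₁, h₁₂, if_neg n.succ_ne_zero, add_zero,
    norm_ofReal_sqrt_mul_sq (by positivity)]
  push_cast
  ring_nf

theorem norm_sq_apply_succ_of_weight
    (h₂ : ∀ f i, T₂ f (i + 1) = (√(((i : ℝ) + 2) / (i + 3)) : ℂ) * f (i + 2)) (y : ℓ²) (n : ℕ) :
    ‖T₂ y (n + 1)‖ ^ 2 = ((n : ℝ) + 2) / (n + 3) * ‖y (n + 2)‖ ^ 2 := by
  rw [h₂, norm_ofReal_sqrt_mul_sq (by positivity)]

theorem two_mul_norm_sq_firstRow_apply_zero_le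
    (h₁ : ∀ f i, T₁ f i = (√(((i : ℝ) + 1) / (i + 4)) : ℂ) * f (i + 1))
    (h₁₂ : ∀ f i, T₁₂ f i = if i = 0 then (√(1 / 5) : ℂ) * f 0 else 0) (x y : ℓ²) :
    2 * ‖(T₁ x + T₁₂ y) 0‖ ^ 2 ≤ ‖x 1‖ ^ 2 + ‖y 0‖ ^ 2 := by
  have h := norm_ofReal_mul_add_sq_le (1 / 2) (√(1 / 5)) (x 1) (y 0)
  rw [Real.sq_sqrt (by norm_num)] at h
  push_cast at h
  rw [firstRow_apply_zero h₁ h₁₂]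
  nlinarith [sq_nonneg ‖x 1‖, sq_nonneg ‖y 0‖]

theorem two_mul_norm_sq_firstRow_apply_one_add_le
    (h₁ : ∀ f i, T₁ f i = (√(((i : ℝ) + 1) / (i + 4)) : ℂ) * f (i + 1))
    (h₁₂ : ∀ f i, T₁₂ f i = if i = 0 then (√(1 / 5) : ℂ) * f 0 else 0)
    (h₂0 : ∀ f, T₂ f 0 = (√(13 / 25) : ℂ) * f 1) (x y : ℓ²) :
    2 * ‖(T₁ x + T₁₂ y) 1‖ ^ 2 + 2 * ‖T₂ y 0‖ ^ 2 ≤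
      ‖x 2‖ ^ 2 + ‖y 1‖ ^ 2 + ‖(T₁ (T₁ x + T₁₂ y) + T₁₂ (T₂ y)) 0‖ ^ 2 := by
  set u := T₁ x + T₁₂ y
  set s := T₂ y
  have hv0 := sq_norm_sub_norm_le_norm_add_sq (1 / 2 * u 1) ((√(1 / 5) : ℂ) * s 0)
  rw [← firstRow_apply_zero h₁ h₁₂ u s, norm_mul, norm_mul, Complex.norm_real,
    Real.norm_of_nonneg (Real.sqrt_nonneg _), show ‖(1 / 2 : ℂ)‖ = 1 / 2 by norm_num] at hv0
  have hu1 : ‖u 1‖ ^ 2 = 2 / 5 * ‖x 2‖ ^ 2 := by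
    rw [norm_sq_firstRow_apply_succ h₁ h₁₂ x y 0]; norm_num
  have hs0 : ‖s 0‖ ^ 2 = 13 / 25 * ‖y 1‖ ^ 2 := by
    rw [h₂0, norm_ofReal_sqrt_mul_sq (by norm_num)]
  have hc := Real.sq_sqrt (show (0 : ℝ) ≤ 1 / 5 by norm_num)
  -- what remains is the positive definite form `3/4 a² - ab/√5 + 8/65 b²`, `a = ‖u 1‖`, `b = ‖s 0‖`
  nlinarith [sq_nonneg (3 / 2 * ‖u 1‖ - √(1 / 5) * ‖s 0‖)]

theorem norm_sq_blockExample_le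
    (h₁ : ∀ f i, T₁ f i = (√(((i : ℝ) + 1) / (i + 4)) : ℂ) * f (i + 1))
    (h₁₂ : ∀ f i, T₁₂ f i = if i = 0 then (√(1 / 5) : ℂ) * f 0 else 0)
    (h₂0 : ∀ f, T₂ f 0 = (√(13 / 25) : ℂ) * f 1)
    (h₂ : ∀ f i, T₂ f (i + 1) = (√(((i : ℝ) + 2) / (i + 3)) : ℂ) * f (i + 2)) (x y : ℓ²) :
    ‖T₁ x + T₁₂ y‖ ^ 2 + ‖T₂ y‖ ^ 2 ≤ ‖x‖ ^ 2 + ‖y‖ ^ 2 := by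
  refine lp.norm_sq_add_norm_sq_le_of_coord ?_ (fun n => ?_) (fun n => ?_)
  · linarith [two_mul_norm_sq_firstRow_apply_zero_le h₁ h₁₂ x y, sq_nonneg ‖(T₁ x + T₁₂ y) 0‖]
  · rw [norm_sq_firstRow_apply_succ h₁ h₁₂]
    exact mul_le_of_le_one_left (sq_nonneg _) ((div_le_one (by positivity)).2 (by linarith))
  · rcases n with _ | n
    · rw [h₂0, norm_ofReal_sqrt_mul_sq (by norm_num)]
      exact mul_le_of_le_one_left (sq_nonneg _) (by norm_num)
    · rw [norm_sq_apply_succ_of_weight h₂]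
      exact mul_le_of_le_one_left (sq_nonneg _) ((div_le_one (by positivity)).2 (by linarith))

theorem two_mul_norm_sq_blockExample_le
    (h₁ : ∀ f i, T₁ f i = (√(((i : ℝ) + 1) / (i + 4)) : ℂ) * f (i + 1))
    (h₁₂ : ∀ f i, T₁₂ f i = if i = 0 then (√(1 / 5) : ℂ) * f 0 else 0)
    (h₂0 : ∀ f, T₂ f 0 = (√(13 / 25) : ℂ) * f 1)
    (h₂ : ∀ f i, T₂ f (i + 1) = (√(((i : ℝ) + 2) / (i + 3)) : ℂ) * f (i + 2)) (x y : ℓ²) :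
    2 * (‖T₁ x + T₁₂ y‖ ^ 2 + ‖T₂ y‖ ^ 2) ≤
      ‖x‖ ^ 2 + ‖y‖ ^ 2 + ‖T₁ (T₁ x + T₁₂ y) + T₁₂ (T₂ y)‖ ^ 2 + ‖T₂ (T₂ y)‖ ^ 2 := by
  refine lp.two_mul_norm_sq_add_norm_sq_le_of_coord
    (two_mul_norm_sq_firstRow_apply_zero_le h₁ h₁₂ x y)
    (two_mul_norm_sq_firstRow_apply_one_add_le h₁ h₁₂ h₂0 x y) (fun n => ?_) (fun n => ?_)
  · have key : 2 * (((n : ℝ) + 3) / (n + 6)) ≤ 1 + (n + 2) / (n + 5) * ((n + 3) / (n + 6)) := by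
      have : 1 + ((n : ℝ) + 2) / (n + 5) * ((n + 3) / (n + 6)) - 2 * ((n + 3) / (n + 6)) =
          6 / ((n + 5) * (n + 6)) := by field_simp; ring
      linarith [show (0 : ℝ) ≤ 6 / ((n + 5) * (n + 6)) by positivity]
    have hu : ‖(T₁ x + T₁₂ y) (n + 2)‖ ^ 2 = ((n : ℝ) + 3) / (n + 6) * ‖x (n + 3)‖ ^ 2 := by
      rw [norm_sq_firstRow_apply_succ h₁ h₁₂ x y (n + 1)]; push_cast; ring_nf
    rw [norm_sq_firstRow_apply_succ h₁ h₁₂ _ _ n, hu]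
    nlinarith [mul_le_mul_of_nonneg_right key (sq_nonneg ‖x (n + 3)‖)]
  · rcases n with _ | n
    · have hs1 : ‖T₂ y 1‖ ^ 2 = 2 / 3 * ‖y 2‖ ^ 2 := by
        rw [norm_sq_apply_succ_of_weight h₂ y 0]; norm_num
      rw [h₂0, norm_ofReal_sqrt_mul_sq (by norm_num), hs1]
      nlinarith [sq_nonneg ‖y 2‖]
    · have hs2 : ‖T₂ y (n + 2)‖ ^ 2 = ((n : ℝ) + 3) / (n + 4) * ‖y (n + 3)‖ ^ 2 := by
        rw [norm_sq_apply_succ_of_weight h₂ y (n + 1)]; push_cast; ring_nf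
      have key : 2 * (((n : ℝ) + 3) / (n + 4)) = 1 + (n + 2) / (n + 3) * ((n + 3) / (n + 4)) := by
        field_simp; ring
      rw [norm_sq_apply_succ_of_weight h₂ _ n, hs2]
      linear_combination ‖y (n + 3)‖ ^ 2 * key

end BlockExample

theorem stmt_11
    (T₁ T₂ T₁₂ : ℓ² →L[ℂ] ℓ²)
    (hT₁0 : T₁ (lp.single 2 0 1) = 0)
    (hT₁ : ∀ i : ℕ, T₁ (lp.single 2 (i + 1) 1) =
      (Real.sqrt ((i + 1) / (i + 4)) : ℂ) • lp.single 2 i 1)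
    (hT₂0 : T₂ (lp.single 2 0 1) = 0)
    (hT₂1 : T₂ (lp.single 2 1 1) = (Real.sqrt (13 / 25) : ℂ) • lp.single 2 0 1)
    (hT₂ : ∀ i : ℕ, T₂ (lp.single 2 (i + 2) 1) =
      (Real.sqrt ((i + 2) / (i + 3)) : ℂ) • lp.single 2 (i + 1) 1)
    (hT₁₂0 : T₁₂ (lp.single 2 0 1) = (Real.sqrt (1 / 5) : ℂ) • lp.single 2 0 1)
    (hT₁₂ : ∀ i : ℕ, T₁₂ (lp.single 2 (i + 1) 1) = 0)
    (T : WithLp 2 (ℓ² × ℓ²) →L[ℂ] WithLp 2 (ℓ² × ℓ²))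
    (hT : ∀ (x y : ℓ²),
      T ((WithLp.equiv 2 (ℓ² × ℓ²)).symm (x, y)) =
        (WithLp.equiv 2 (ℓ² × ℓ²)).symm (T₁ x + T₁₂ y, T₂ y)) :
    IsHypercontraction T 2 ∧ ¬ IsHypercontraction T₂ 2 := by
  have hp : (2 : ENNReal) ≠ ⊤ := ENNReal.ofNat_ne_top
  have h₁ : ∀ f i, T₁ f i = (√(((i : ℝ) + 1) / (i + 4)) : ℂ) * f (i + 1) := fun f i =>
    lp.apply_eq_of_backwardShift hp hT₁0 (fun j => ⟨_, hT₁ j⟩) (hT₁ i) f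
  have hT₂s : ∀ j, ∃ c : ℂ, T₂ (lp.single 2 (j + 1) 1) = c • lp.single 2 j 1
    | 0 => ⟨_, hT₂1⟩
    | j + 1 => ⟨_, hT₂ j⟩
  have h₂0 : ∀ f, T₂ f 0 = (√(13 / 25) : ℂ) * f 1 := lp.apply_eq_of_backwardShift hp hT₂0 hT₂s hT₂1
  have h₂ : ∀ f i, T₂ f (i + 1) = (√(((i : ℝ) + 2) / (i + 3)) : ℂ) * f (i + 2) := fun f i =>
    lp.apply_eq_of_backwardShift hp hT₂0 hT₂s (hT₂ i) f
  have h₁₂ := lp.apply_eq_of_apply_single_succ_eq_zero hp hT₁₂ hT₁₂0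
  have hnorm : ∀ x y : ℓ², ‖(WithLp.equiv 2 (ℓ² × ℓ²)).symm (x, y)‖ ^ 2 = ‖x‖ ^ 2 + ‖y‖ ^ 2 :=
    fun x y => WithLp.prod_norm_sq_eq_of_L2 _
  refine ⟨(isHypercontraction_two_iff T).2 fun z => ?_, ?_⟩
  · have hz : z = (WithLp.equiv 2 (ℓ² × ℓ²)).symm (z.fst, z.snd) := rfl
    rw [hz, hT, hT, hnorm, hnorm, hnorm]
    exact ⟨norm_sq_blockExample_le h₁ h₁₂ h₂0 h₂ _ _,
      by linarith [two_mul_norm_sq_blockExample_le h₁ h₁₂ h₂0 h₂ z.fst z.snd]⟩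
  · refine not_isHypercontraction_two_of_apply_apply_eq_zero T₂ (z := lp.single 2 1 1)
      (by rw [hT₂1, map_smul, hT₂0, smul_zero]) ?_
    rw [hT₂1, norm_smul, lp.norm_single (by norm_num), lp.norm_single (by norm_num), norm_one,
      mul_one, Complex.norm_real, Real.norm_of_nonneg (Real.sqrt_nonneg _),
      Real.sq_sqrt (by norm_num)]
    norm_num
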